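/- arXiv:1005.3963 — 2 statements merged into one kernel-verified Lean document; each statement's English description precedes it below -/
import Mathlib

section
/- Let Ω ⊆ ℂ be an open set, let s : Ω → ℝ be a C² function, and let A₁, A₂ : Ω → ℂ be functions. Define A₃ := s_z (the Wirtinger z-derivative of s). Assume that at every point of Ω: (i) 0 < s ≤ 2; (ii) A₁² + A₂² + A₃² = 0 (the conformality relation); and (iii) Δs = 4(|A₁|² − |A₂|²) (equivalently ∂_z̄ A₃ = |A₁|² − |A₂|², the equation satisfied by the third coordinate of a conformal minimal immersion into Sol₃). Then the function φ := 1/s is subharmonic on Ω, i.e. Δ(1/s) ≥ 0 at every point of Ω. -/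
/-! The chain rule gives `Δ(1/s) = (2|∇s|² − s Δs) / s³`, and `|∇s|² = 4|s_z|² = 4|A₃|²`.
Conformality gives `|A₁|² = |A₂² + A₃²| ≤ |A₂|² + |A₃|²`, so `Δs ≤ 4|A₃|²`, and since
`0 < s ≤ 2` the numerator is at least `4(2 − s)|A₃|² ≥ 0`. -/

/-- The Wirtinger `z`-derivative `f_z = (∂f/∂x − i·∂f/∂y)/2` of a real-valued
function on `ℂ`, as a complex number. -/
noncomputable def wirtingerZ (f : ℂ → ℝ) (z : ℂ) : ℂ :=
  ((fderiv ℝ f z 1 : ℝ) - Complex.I * (fderiv ℝ f z Complex.I : ℝ)) / 2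

/-- The Laplacian `Δf = ∂²f/∂x² + ∂²f/∂y²` of a real-valued function on `ℂ`. -/
noncomputable def lap (f : ℂ → ℝ) (z : ℂ) : ℝ :=
  fderiv ℝ (fun w => fderiv ℝ f w 1) z 1 +
    fderiv ℝ (fun w => fderiv ℝ f w Complex.I) z Complex.I

open Filter Topology

section OneDiv

variable {E : Type*} [NormedAddCommGroup E] [NormedSpace ℝ E] {s : E → ℝ}

theorem HasFDerivAt.one_div {s' : E →L[ℝ] ℝ} {w : E} (hs : HasFDerivAt s s' w) (hw : s w ≠ 0) :
    HasFDerivAt (fun u => 1 / s u) (-((s w ^ 2)⁻¹ • s')) w := by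
  simpa [Function.comp_def, one_div] using (hasDerivAt_inv hw).comp_hasFDerivAt w hs

theorem fderiv_fderiv_one_div_apply {z : E} (hs : ContDiffAt ℝ 2 s z) (hz : s z ≠ 0) (v : E) :
    fderiv ℝ (fun w => fderiv ℝ (fun u => 1 / s u) w v) z v =
      (2 * fderiv ℝ s z v ^ 2 - s z * fderiv ℝ (fun w => fderiv ℝ s w v) z v) / s z ^ 3 := by
  have hdiff : ∀ᶠ w in 𝓝 z, DifferentiableAt ℝ s w :=
    (hs.eventually (by simp)).mono fun w hw => hw.differentiableAt (by simp)
  have hfirst : (fun w => fderiv ℝ (fun u => 1 / s u) w v)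
      =ᶠ[𝓝 z] fun w => -fderiv ℝ s w v * (1 / s w ^ 2) := by
    filter_upwards [hdiff, hs.continuousAt.eventually_ne hz] with w hdw hw
    rw [(hdw.hasFDerivAt.one_div hw).fderiv]
    simp [div_eq_mul_inv, mul_comm]
  have hs' : HasFDerivAt s (fderiv ℝ s z) z := (hs.differentiableAt (by simp)).hasFDerivAt
  have hsv : HasFDerivAt (fun w => fderiv ℝ s w v) (fderiv ℝ (fun w => fderiv ℝ s w v) z) z :=
    (((hs.fderiv_right (m := 1) le_rfl).differentiableAt one_ne_zero).clm_apply
      (differentiableAt_const v)).hasFDerivAt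
  rw [hfirst.fderiv_eq, (hsv.fun_neg.fun_mul ((hs'.pow 2).one_div (pow_ne_zero 2 hz))).fderiv]
  simp only [Nat.add_one_sub_one, pow_one, nsmul_eq_mul, Nat.cast_ofNat, smul_neg, neg_smul,
    neg_neg, one_div, add_apply, smul_apply, smul_eq_mul, neg_apply]
  field_simp
  ring

end OneDiv

theorem four_mul_sq_norm_wirtingerZ (f : ℂ → ℝ) (z : ℂ) :
    4 * ‖wirtingerZ f z‖ ^ 2 = fderiv ℝ f z 1 ^ 2 + fderiv ℝ f z Complex.I ^ 2 := by
  rw [wirtingerZ, Complex.sq_norm, Complex.normSq_apply]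
  simp only [Complex.div_ofNat_re, Complex.sub_re, Complex.ofReal_re, Complex.mul_re,
    Complex.I_re, zero_mul, Complex.I_im, Complex.ofReal_im, mul_zero, sub_self, sub_zero,
    Complex.div_ofNat_im, Complex.sub_im, Complex.mul_im, one_mul, zero_add, zero_sub]
  ring

theorem lap_one_div {s : ℂ → ℝ} {z : ℂ} (hs : ContDiffAt ℝ 2 s z) (hz : s z ≠ 0) :
    lap (fun w => 1 / s w) z = (8 * ‖wirtingerZ s z‖ ^ 2 - s z * lap s z) / s z ^ 3 := by
  rw [lap, lap, fderiv_fderiv_one_div_apply hs hz, fderiv_fderiv_one_div_apply hs hz]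
  linear_combination -(2 / s z ^ 3) * four_mul_sq_norm_wirtingerZ s z

theorem sq_norm_sub_sq_norm_le_of_sq_add_sq_add_sq_eq_zero {𝕜 : Type*} [NormedDivisionRing 𝕜]
    {a b c : 𝕜} (h : a ^ 2 + b ^ 2 + c ^ 2 = 0) : ‖a‖ ^ 2 - ‖b‖ ^ 2 ≤ ‖c‖ ^ 2 := by
  have ha : a ^ 2 = -(b ^ 2 + c ^ 2) := eq_neg_of_add_eq_zero_left (by rwa [← add_assoc])
  have := norm_add_le (b ^ 2) (c ^ 2)
  rw [← norm_neg, ← ha, norm_pow, norm_pow, norm_pow] at this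
  linarith

/-- If `s` is `C²` on an open set `Ω ⊆ ℂ`, with `0 < s ≤ 2` on `Ω`, and if
`A₁, A₂, A₃ := s_z` satisfy the conformality relation `A₁² + A₂² + A₃² = 0` and
the minimal surface equation `Δs = 4(|A₁|² − |A₂|²)` on `Ω`, then `1/s` is
subharmonic on `Ω`: its Laplacian is nonnegative at every point of `Ω`. -/
theorem sol_inv_s_subharmonic (Ω : Set ℂ) (hΩ : IsOpen Ω)
    (s : ℂ → ℝ) (hs : ContDiffOn ℝ 2 s Ω)
    (A₁ A₂ A₃ : ℂ → ℂ) (hA₃ : ∀ z ∈ Ω, A₃ z = wirtingerZ s z)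
    (hs_pos : ∀ z ∈ Ω, 0 < s z) (hs_le : ∀ z ∈ Ω, s z ≤ 2)
    (hconf : ∀ z ∈ Ω, (A₁ z) ^ 2 + (A₂ z) ^ 2 + (A₃ z) ^ 2 = 0)
    (hmin : ∀ z ∈ Ω,
      lap s z = 4 * ((‖A₁ z‖) ^ 2 - (‖A₂ z‖) ^ 2)) :
    ∀ z ∈ Ω, 0 ≤ lap (fun w => 1 / s w) z := by
  intro z hz
  have hpos := hs_pos z hz
  rw [lap_one_div (hs.contDiffAt (hΩ.mem_nhds hz)) hpos.ne', ← hA₃ z hz, hmin z hz]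
  have hA := sq_norm_sub_sq_norm_le_of_sq_add_sq_add_sq_eq_zero (hconf z hz)
  refine div_nonneg ?_ (by positivity)
  nlinarith [mul_nonneg (sub_nonneg.2 (hs_le z hz)) (sq_nonneg ‖A₃ z‖)]
end

section
/- Let A₁, A₂, A₃ be complex numbers satisfying A₁² + A₂² + A₃² = 0, and let y be a real number with 0 < y ≤ 4. Then 4|A₁|² + 2y·Re(conj(A₂)·A₃) ≥ 0. -/
/-!
The conformality relation gives `|A₁|² = |A₂² + A₃²|`, and
`|z² + w²|² + 4 Im(z̄w)² = (|z|² + |w|²)² ≥ 4|z̄w|² = 4 Re(z̄w)² + 4 Im(z̄w)²`,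
so `4|A₁|² ≥ 8|Re(Ā₂A₃)| ≥ 2y|Re(Ā₂A₃)|` as soon as `0 ≤ y ≤ 4`.
-/

open ComplexConjugate

namespace Complex

lemma norm_sq_add_sq_sq_add_four_mul_im_sq (z w : ℂ) :
    ‖z ^ 2 + w ^ 2‖ ^ 2 + 4 * (conj z * w).im ^ 2 = (‖z‖ ^ 2 + ‖w‖ ^ 2) ^ 2 := by
  simp only [Complex.sq_norm, normSq_apply]
  simp only [add_re, add_im, pow_two, mul_re, mul_im, conj_re, conj_im]
  ring

lemma four_mul_norm_conj_mul_sq_le (z w : ℂ) :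
    4 * ‖conj z * w‖ ^ 2 ≤ (‖z‖ ^ 2 + ‖w‖ ^ 2) ^ 2 := by
  rw [norm_mul, norm_conj]
  nlinarith [sq_nonneg (‖z‖ ^ 2 - ‖w‖ ^ 2)]

lemma two_mul_abs_re_conj_mul_le_norm_sq_add_sq (z w : ℂ) :
    2 * |(conj z * w).re| ≤ ‖z ^ 2 + w ^ 2‖ := by
  have hsplit : ‖conj z * w‖ ^ 2 = (conj z * w).re ^ 2 + (conj z * w).im ^ 2 := by
    rw [Complex.sq_norm, normSq_apply]
    ring
  have hsq : (2 * |(conj z * w).re|) ^ 2 ≤ ‖z ^ 2 + w ^ 2‖ ^ 2 := by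
    have := four_mul_norm_conj_mul_sq_le z w
    rw [← norm_sq_add_sq_sq_add_four_mul_im_sq, hsplit] at this
    rw [mul_pow, sq_abs]
    linarith
  exact (pow_le_pow_iff_left₀ (by positivity) (norm_nonneg _) two_ne_zero).1 hsq

end Complex

/-- If complex numbers `A₁, A₂, A₃` satisfy the conformality relation
`A₁² + A₂² + A₃² = 0` and `0 < y ≤ 4`, then `4|A₁|² + 2y·Re(conj(A₂)·A₃) ≥ 0`. -/
theorem nil_subharmonicity_algebraic (A₁ A₂ A₃ : ℂ) (y : ℝ)
    (hconf : A₁ ^ 2 + A₂ ^ 2 + A₃ ^ 2 = 0)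
    (hy_pos : 0 < y) (hy_le : y ≤ 4) :
    0 ≤ 4 * ‖A₁‖ ^ 2 + 2 * y * ((starRingEnd ℂ) A₂ * A₃).re := by
  set p := ((starRingEnd ℂ) A₂ * A₃).re
  have hA₁ : ‖A₁‖ ^ 2 = ‖A₂ ^ 2 + A₃ ^ 2‖ := by
    rw [← norm_pow, ← norm_neg, neg_eq_of_add_eq_zero_right (by rw [← add_assoc]; exact hconf)]
  have hp : 2 * |p| ≤ ‖A₁‖ ^ 2 := hA₁ ▸ Complex.two_mul_abs_re_conj_mul_le_norm_sq_add_sq A₂ A₃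
  have h₁ : 0 ≤ (4 - y) * |p| := mul_nonneg (by linarith) (abs_nonneg p)
  have h₂ : 0 ≤ y * (|p| + p) := mul_nonneg hy_pos.le (by linarith [neg_abs_le p])
  linarith
end
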